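/- Let G be a controllable graph on n vertices with adjacency matrix A and walk matrix W. Let Q be a rational orthogonal matrix with Qe = e such that QᵀAQ is a symmetric (0,1)-matrix with zero diagonal, with level ℓ, and let p be an odd prime dividing ℓ. Assume the rank of W over F_p is n−1, the rank of the integer matrix ℓQ over F_p is 1, and z is an integer vector with Wᵀz ≡ 0 (mod p), zᵀz ≡ 0 (mod p), and z ≢ 0 (mod p). If λ₀ is an integer with Az ≡ λ₀z (mod p), then zᵀAz ≡ λ₀·zᵀz (mod p²). -/
import Mathlib


open Matrix

open scoped Classical in
/-- The (0,1)-adjacency matrix of a simple graph on `Fin n`, with entries in `R`. -/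
noncomputable def adjMat {n : ℕ} (R : Type*) [Zero R] [One R] (G : SimpleGraph (Fin n)) :
    Matrix (Fin n) (Fin n) R :=
  Matrix.of fun i j => if G.Adj i j then 1 else 0

/-- The walk matrix `W = [e, Ae, A²e, …, A^{n−1}e]` of a square matrix `A`,
where `e` is the all-ones vector: the `j`-th column is `A^j e`. -/
noncomputable def walkMatrix {R : Type*} [CommRing R] {n : ℕ} (A : Matrix (Fin n) (Fin n) R) :
    Matrix (Fin n) (Fin n) R :=
  Matrix.of fun i j => (A ^ (j : ℕ) *ᵥ fun _ => 1) i


lemma adjMat_map {n : ℕ} (G : SimpleGraph (Fin n)) (R : Type*) [NonAssocRing R] :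
    (adjMat ℤ G).map (Int.cast : ℤ → R) = adjMat R G := by
  ext i j
  simp only [adjMat, Matrix.map_apply, Matrix.of_apply]
  split_ifs <;> simp

lemma walkMatrix_map {R S : Type*} [CommRing R] [CommRing S] (f : R →+* S) {n : ℕ}
    (A : Matrix (Fin n) (Fin n) R) :
    (walkMatrix A).map f = walkMatrix (A.map f) := by
  ext i j
  have hpow : (A.map f) ^ (j : ℕ) = (A ^ (j : ℕ)).map f := by
    simp [← RingHom.mapMatrix_apply, ← map_pow]
  simp only [walkMatrix, Matrix.map_apply, Matrix.of_apply, hpow, Matrix.mulVec, dotProduct]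
  simp


/-- **Lemma 3.3.** Under the assumptions `rank_p W = n − 1`,
`rank_p (ℓQ) = 1`, with `z` satisfying `Wᵀz ≡ 0`, `zᵀz ≡ 0`, `z ≢ 0 (mod p)` and
`Az ≡ λ₀z (mod p)`, we have `zᵀAz ≡ λ₀·zᵀz (mod p²)`. -/
theorem stmt_6 {n : ℕ} (G : SimpleGraph (Fin n))
    (A : Matrix (Fin n) (Fin n) ℚ) (hA : A = adjMat ℚ G)
    (AZ : Matrix (Fin n) (Fin n) ℤ) (hAZ : AZ = adjMat ℤ G)
    (W : Matrix (Fin n) (Fin n) ℤ) (hW : W = walkMatrix AZ)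
    (hctrl : W.det ≠ 0)
    (Q : Matrix (Fin n) (Fin n) ℚ)
    (hQorth : Qᵀ * Q = 1) (hQe : Q *ᵥ (fun _ => 1) = fun _ => 1)
    (hsymm : (Qᵀ * A * Q).IsSymm)
    (h01 : ∀ i j, (Qᵀ * A * Q) i j = 0 ∨ (Qᵀ * A * Q) i j = 1)
    (hdiag : ∀ i, (Qᵀ * A * Q) i i = 0)
    (ℓ : ℕ)
    (hlevel : IsLeast {m : ℕ | 0 < m ∧ ∀ i j, ∃ z : ℤ, (m : ℚ) * Q i j = (z : ℚ)} ℓ)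
    (p : ℕ) (hp : p.Prime) (hodd : Odd p) (hpl : p ∣ ℓ)
    (hrankW : (W.map (Int.cast : ℤ → ZMod p)).rank = n - 1)
    (M : Matrix (Fin n) (Fin n) ℤ) (hM : ∀ i j, (M i j : ℚ) = (ℓ : ℚ) * Q i j)
    (hrankM : (M.map (Int.cast : ℤ → ZMod p)).rank = 1)
    (z : Fin n → ℤ)
    (hz1 : ∀ i, (p : ℤ) ∣ (Wᵀ *ᵥ z) i)
    (hz2 : (p : ℤ) ∣ z ⬝ᵥ z)
    (hz3 : ¬(∀ i, (p : ℤ) ∣ z i))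
    (lam : ℤ) (hlam : ∀ i, (p : ℤ) ∣ ((AZ *ᵥ z) i - lam * z i)) :
    (p : ℤ) ^ 2 ∣ (z ⬝ᵥ (AZ *ᵥ z) - lam * (z ⬝ᵥ z)) := by
  classical
  rcases Nat.eq_zero_or_pos n with hn0 | hn
  · subst hn0; exact absurd (fun i => i.elim0) hz3
  haveI : Fact p.Prime := ⟨hp⟩
  have hp0 : (p : ℤ) ≠ 0 := by exact_mod_cast hp.ne_zero
  have hp2 : p ≠ 2 := by rintro rfl; rw [Nat.odd_iff] at hodd; norm_num at hodd
  have h2K : (2 : ZMod p) ≠ 0 := by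
    intro h
    have h2 : (p : ℤ) ∣ 2 := (ZMod.intCast_zmod_eq_zero_iff_dvd 2 p).mp (by exact_mod_cast h)
    have h2' : p ∣ 2 := by exact_mod_cast h2
    exact hp2 ((Nat.prime_dvd_prime_iff_eq hp Nat.prime_two).mp h2')
  have hQQt : Q * Qᵀ = 1 := mul_eq_one_comm.mp hQorth
  set C : Matrix (Fin n) (Fin n) ℚ := Qᵀ * A * Q with hC
  set B : Matrix (Fin n) (Fin n) ℤ := Matrix.of (fun i j => if C i j = 1 then 1 else 0) with hB
  have hBC : ∀ i j, ((B i j : ℤ) : ℚ) = C i j := by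
    intro i j
    rcases h01 i j with h | h <;> simp [hB, h]
  have hBsymm : ∀ i j, B i j = B j i := by
    intro i j
    have h1 : C j i = C i j := by have := congrFun (congrFun hsymm i) j; simpa using this
    simp [hB, h1]
  have mapmul : ∀ X Y : Matrix (Fin n) (Fin n) ℤ,
      (X * Y).map (Int.cast : ℤ → ℚ) = X.map Int.cast * Y.map Int.cast :=
    fun X Y => Matrix.map_mul (f := Int.castRingHom ℚ)
  have wmap : ∀ X : Matrix (Fin n) (Fin n) ℤ,
      (walkMatrix X).map (Int.cast : ℤ → ℚ) = walkMatrix (X.map (Int.cast : ℤ → ℚ)) :=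
    fun X => walkMatrix_map (Int.castRingHom ℚ) X
  have hAZA : AZ.map (Int.cast : ℤ → ℚ) = A := by rw [hAZ, hA]; exact adjMat_map G ℚ
  have hMQ : M.map (Int.cast : ℤ → ℚ) = (ℓ : ℚ) • Q := by
    ext i j; simp [hM i j]
  have hBQ : B.map (Int.cast : ℤ → ℚ) = C := by
    ext i j; simpa using hBC i j
  have castinj : ∀ (X Y : Matrix (Fin n) (Fin n) ℤ),
      X.map (Int.cast : ℤ → ℚ) = Y.map (Int.cast : ℤ → ℚ) → X = Y := by
    intro X Y h; ext i j
    have := congrFun (congrFun h i) j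
    simp only [Matrix.map_apply] at this
    exact_mod_cast this
  have hAQ : A * Q = Q * C := by
    rw [hC, show Qᵀ * A * Q = Qᵀ * (A * Q) from Matrix.mul_assoc _ _ _, ← Matrix.mul_assoc,
      hQQt, Matrix.one_mul]
  -- E1 : AZ * M = M * B over ℤ
  have hE1 : AZ * M = M * B := by
    apply castinj
    rw [mapmul, mapmul, hAZA, hMQ, hBQ, Matrix.mul_smul, Matrix.smul_mul, hAQ]
  -- E2 : Mᵀ M = ℓ² I over ℤ
  have hE2 : Mᵀ * M = ((ℓ : ℤ) ^ 2) • (1 : Matrix (Fin n) (Fin n) ℤ) := by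
    apply castinj
    have h1 : (Mᵀ).map (Int.cast : ℤ → ℚ) = (ℓ : ℚ) • Qᵀ := by
      rw [Matrix.transpose_map, hMQ, Matrix.transpose_smul]
    rw [mapmul, h1, hMQ, Matrix.smul_mul, Matrix.mul_smul, hQorth]
    ext i j
    simp only [Matrix.map_apply, Matrix.smul_apply, Matrix.one_apply, smul_eq_mul]
    split_ifs <;> push_cast <;> ring
  -- E3 : p divides entries of Wᵀ M
  have hE3 : ∀ i j, (p : ℤ) ∣ (Wᵀ * M) i j := by
    have hcol : ∀ j : ℕ, A ^ j *ᵥ (fun _ => (1:ℚ)) = Q *ᵥ (C ^ j *ᵥ (fun _ => 1)) := by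
      intro j
      induction j with
      | zero => simp [hQe]
      | succ j ih =>
        calc A ^ (j+1) *ᵥ (fun _ => (1:ℚ)) = (A * A ^ j) *ᵥ (fun _ => 1) := by rw [pow_succ']
          _ = A *ᵥ (A ^ j *ᵥ fun _ => 1) := (Matrix.mulVec_mulVec _ _ _).symm
          _ = A *ᵥ (Q *ᵥ (C ^ j *ᵥ fun _ => 1)) := by rw [ih]
          _ = (A * Q) *ᵥ (C ^ j *ᵥ fun _ => 1) := Matrix.mulVec_mulVec _ _ _
          _ = (Q * C) *ᵥ (C ^ j *ᵥ fun _ => 1) := by rw [hAQ]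
          _ = Q *ᵥ ((C * C ^ j) *ᵥ fun _ => 1) := by
                rw [Matrix.mulVec_mulVec, Matrix.mulVec_mulVec, Matrix.mul_assoc]
          _ = Q *ᵥ (C ^ (j+1) *ᵥ fun _ => 1) := by rw [← pow_succ']
    have hWQ : W.map (Int.cast : ℤ → ℚ) = Q * walkMatrix C := by
      have h0 : W.map (Int.cast : ℤ → ℚ) = walkMatrix A := by
        rw [hW, wmap, hAZA]
      rw [h0]
      ext i j
      have := congrFun (hcol j) i
      simp only [walkMatrix, Matrix.of_apply, Matrix.mul_apply, Matrix.mulVec, dotProduct] at *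
      rw [this]
    have hWtM : Wᵀ * M = (ℓ : ℤ) • (walkMatrix B)ᵀ := by
      apply castinj
      have hWB : (walkMatrix B).map (Int.cast : ℤ → ℚ) = walkMatrix C := by
        rw [wmap, hBQ]
      have hsm : ((ℓ:ℤ) • (walkMatrix B)ᵀ).map (Int.cast : ℤ → ℚ)
          = (ℓ:ℚ) • ((walkMatrix B).map (Int.cast : ℤ → ℚ))ᵀ := by
        ext i j
        simp only [Matrix.map_apply, Matrix.smul_apply, Matrix.transpose_apply, smul_eq_mul]
        push_cast; ring
      rw [mapmul, Matrix.transpose_map, hWQ, hMQ, hsm, hWB, Matrix.transpose_mul,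
        Matrix.mul_smul, Matrix.mul_assoc, hQorth, Matrix.mul_one]
    intro i j
    rw [hWtM]
    obtain ⟨m, hm⟩ := hpl
    exact ⟨(m : ℤ) * (walkMatrix B)ᵀ i j, by
      simp only [Matrix.smul_apply, smul_eq_mul, hm]; push_cast; ring⟩
  -- mod p : kernel of Wbᵀ spanned by zb
  set Wb := W.map (Int.cast : ℤ → ZMod p) with hWb
  set zb : Fin n → ZMod p := fun i => ((z i : ℤ) : ZMod p) with hzb
  have hzbne : zb ≠ 0 := by
    intro h
    apply hz3
    intro i
    have := congrFun h i
    exact (ZMod.intCast_zmod_eq_zero_iff_dvd _ p).mp this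
  have hzker : Wbᵀ *ᵥ zb = 0 := by
    funext i
    have h := hz1 i
    rw [show (Wᵀ *ᵥ z) i = ∑ k, W k i * z k from by
      simp [Matrix.mulVec, dotProduct, Matrix.transpose_apply]] at h
    have h0 : ((∑ k, W k i * z k : ℤ) : ZMod p) = 0 :=
      (ZMod.intCast_zmod_eq_zero_iff_dvd _ p).mpr h
    have : (Wbᵀ *ᵥ zb) i = ((∑ k, W k i * z k : ℤ) : ZMod p) := by
      simp only [Matrix.mulVec, dotProduct, Matrix.transpose_apply, hWb, Matrix.map_apply, hzb]
      push_cast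
      rfl
    rw [Pi.zero_apply, this, h0]
  have hkerdim : Module.finrank (ZMod p) (LinearMap.ker (Wbᵀ.mulVecLin)) = 1 := by
    have h1 := LinearMap.finrank_range_add_finrank_ker (Wbᵀ.mulVecLin)
    have h2 : Module.finrank (ZMod p) (LinearMap.range (Wbᵀ.mulVecLin)) = n - 1 := by
      have h3 : (Wbᵀ).rank = n - 1 := by rw [Matrix.rank_transpose]; exact hrankW
      rw [← h3]; rfl
    rw [h2, Module.finrank_pi] at h1
    simp only [Fintype.card_fin] at h1
    omega
  have hzmem : zb ∈ LinearMap.ker (Wbᵀ.mulVecLin) := by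
    rw [LinearMap.mem_ker, Matrix.mulVecLin_apply]; exact hzker
  have hspan : ∀ v ∈ LinearMap.ker (Wbᵀ.mulVecLin), ∃ c : ZMod p, v = c • zb := by
    have hsp : Submodule.span (ZMod p) {zb} = LinearMap.ker (Wbᵀ.mulVecLin) := by
      apply Submodule.eq_of_le_of_finrank_le
      · rw [Submodule.span_le, Set.singleton_subset_iff]; exact hzmem
      · rw [hkerdim, finrank_span_singleton hzbne]
    intro v hv
    rw [← hsp] at hv
    obtain ⟨c, hc⟩ := Submodule.mem_span_singleton.mp hv
    exact ⟨c, hc.symm⟩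
  set Mb := M.map (Int.cast : ℤ → ZMod p) with hMb
  have hcolM : ∀ j, ∃ c : ZMod p, (fun i => Mb i j) = c • zb := by
    intro j
    apply hspan
    simp only [LinearMap.mem_ker, Matrix.mulVecLin_apply]
    funext i
    have h := hE3 i j
    have h0 : (((Wᵀ * M) i j : ℤ) : ZMod p) = 0 := (ZMod.intCast_zmod_eq_zero_iff_dvd _ p).mpr h
    have h1 : (Wbᵀ *ᵥ fun i => Mb i j) i = (((Wᵀ * M) i j : ℤ) : ZMod p) := by
      simp only [Matrix.mulVec, dotProduct, Matrix.transpose_apply, hWb, hMb, Matrix.map_apply,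
        Matrix.mul_apply]
      push_cast
      rfl
    rw [Pi.zero_apply, h1, h0]
  choose ξK hξK using hcolM
  have hMcast : ∀ i j, ((M i j : ℤ) : ZMod p) = ((z i : ℤ) : ZMod p) * ξK j := by
    intro i j
    have := congrFun (hξK j) i
    simp only [hMb, Matrix.map_apply, Pi.smul_apply, smul_eq_mul, hzb] at this
    rw [this]; ring
  have hlift : ∀ j, ∃ a : ℤ, ((a : ℤ) : ZMod p) = ξK j := fun j => ZMod.intCast_surjective (ξK j)
  choose ξ hξ using hlift
  have hMzξ : ∀ i j, (p:ℤ) ∣ M i j - z i * ξ j := by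
    intro i j
    rw [← ZMod.intCast_zmod_eq_zero_iff_dvd]
    push_cast
    rw [hMcast i j, hξ j]; ring
  have hξne : ∃ k, ((ξ k : ℤ) : ZMod p) ≠ 0 := by
    by_contra hcon
    push_neg at hcon
    have hM0 : Mb = 0 := by
      ext i j
      have h := hMcast i j
      rw [← hξ j, hcon j, mul_zero] at h
      simpa [hMb] using h
    rw [hM0] at hrankM
    simp [Matrix.rank_zero] at hrankM
  -- integer decompositions
  have hAZsymm : ∀ i j, AZ i j = AZ j i := by
    intro i j
    rw [hAZ]
    simp only [adjMat, Matrix.of_apply]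
    rw [G.adj_comm]
  have hNex : ∀ i j, ∃ c : ℤ, M i j = z i * ξ j + p * c := by
    intro i j
    obtain ⟨c, hc⟩ := hMzξ i j
    exact ⟨c, by linarith⟩
  choose N hN using hNex
  have hwex : ∀ i, ∃ c : ℤ, (AZ *ᵥ z) i = lam * z i + p * c := by
    intro i
    obtain ⟨c, hc⟩ := hlam i
    exact ⟨c, by linarith⟩
  choose w hw using hwex
  obtain ⟨s, hs⟩ := hz2
  set u : Fin n → ℤ := fun j => ∑ i, z i * N i j with hu
  set Zw : ℤ := ∑ i, z i * w i with hZw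
  have hAzi : ∀ i, ∑ j, AZ i j * z j = lam * z i + p * w i := by
    intro i
    have h := hw i
    rwa [show (AZ *ᵥ z) i = ∑ j, AZ i j * z j from by
      simp [Matrix.mulVec, dotProduct]] at h
  -- reduce the goal to p ∣ Zw
  have key : z ⬝ᵥ (AZ *ᵥ z) - lam * (z ⬝ᵥ z) = p * Zw := by
    have h1 : z ⬝ᵥ (AZ *ᵥ z) = ∑ i, z i * (lam * z i + p * w i) := by
      simp only [dotProduct]
      exact Finset.sum_congr rfl fun i _ => by rw [hw i]
    rw [h1]
    simp only [dotProduct, hZw, Finset.mul_sum]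
    rw [← Finset.sum_sub_distrib]
    exact Finset.sum_congr rfl fun i _ => by ring
  -- F2 : eigenvector relation for ξ mod p
  have hABk : ∀ i k, ((z i : ℤ) : ZMod p) * (((lam:ℤ):ZMod p) * ((ξ k : ℤ):ZMod p))
      = ((z i : ℤ) : ZMod p) * ∑ j, ((ξ j : ℤ):ZMod p) * ((B j k : ℤ):ZMod p) := by
    intro i k
    have h := congrFun (congrFun hE1 i) k
    rw [Matrix.mul_apply, Matrix.mul_apply] at h
    have hc : ((∑ j, AZ i j * M j k : ℤ):ZMod p) = ((∑ j, M i j * B j k : ℤ):ZMod p) := by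
      rw [h]
    push_cast at hc
    have hL : (∑ j, ((AZ i j:ℤ):ZMod p) * ((M j k:ℤ):ZMod p))
        = ((ξ k:ℤ):ZMod p) * ∑ j, ((AZ i j:ℤ):ZMod p) * ((z j:ℤ):ZMod p) := by
      rw [Finset.mul_sum]
      refine Finset.sum_congr rfl fun j _ => ?_
      rw [hMcast j k, ← hξ k]
      ring
    have hz' : (∑ j, ((AZ i j:ℤ):ZMod p) * ((z j:ℤ):ZMod p)) = ((lam:ℤ):ZMod p) * ((z i:ℤ):ZMod p) := by
      have h2 : ((∑ j, AZ i j * z j : ℤ):ZMod p) = (((lam * z i + p * w i):ℤ):ZMod p) := by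
        rw [hAzi i]
      push_cast at h2
      simpa [ZMod.natCast_self] using h2
    have hR : (∑ j, ((M i j:ℤ):ZMod p) * ((B j k:ℤ):ZMod p))
        = ((z i:ℤ):ZMod p) * ∑ j, ((ξ j:ℤ):ZMod p) * ((B j k:ℤ):ZMod p) := by
      rw [Finset.mul_sum]
      refine Finset.sum_congr rfl fun j _ => ?_
      rw [hMcast i j, ← hξ j]
      ring
    rw [hL, hz', hR] at hc
    linear_combination hc
  have hine : ∃ i, ((z i : ℤ):ZMod p) ≠ 0 := by
    by_contra hcon
    push_neg at hcon
    exact hzbne (funext fun i => hcon i)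
  obtain ⟨i0, hi0⟩ := hine
  have hBξ : ∀ k, (∑ j, ((ξ j : ℤ):ZMod p) * ((B j k : ℤ):ZMod p))
      = ((lam:ℤ):ZMod p) * ((ξ k : ℤ):ZMod p) :=
    fun k => (mul_left_cancel₀ hi0 (hABk i0 k)).symm
  -- F3 : quadratic relation
  have hMtM : ∀ i j, ∑ k, M k i * M k j = (ℓ:ℤ)^2 * (if i = j then 1 else 0) := by
    intro i j
    have h := congrFun (congrFun hE2 i) j
    rw [Matrix.mul_apply] at h
    simpa [Matrix.transpose_apply, Matrix.smul_apply, Matrix.one_apply] using h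
  obtain ⟨m, hm⟩ := hpl
  have hlZ : (ℓ:ℤ) = (p:ℤ) * (m:ℤ) := by exact_mod_cast hm
  have hquad : ∀ i j, (p:ℤ) ∣ (s * ξ i * ξ j + ξ i * u j + u i * ξ j) := by
    intro i j
    have hexp : ∑ k, M k i * M k j
        = ∑ k, ((ξ i * ξ j) * (z k * z k) + ((p:ℤ) * ξ i) * (z k * N k j)
            + ((p:ℤ) * ξ j) * (z k * N k i) + ((p:ℤ)^2) * (N k i * N k j)) :=
      Finset.sum_congr rfl fun k _ => by rw [hN k i, hN k j]; ring
    have hsplit : ∑ k, ((ξ i * ξ j) * (z k * z k) + ((p:ℤ) * ξ i) * (z k * N k j)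
            + ((p:ℤ) * ξ j) * (z k * N k i) + ((p:ℤ)^2) * (N k i * N k j))
        = (ξ i * ξ j) * (∑ k, z k * z k) + ((p:ℤ) * ξ i) * (∑ k, z k * N k j)
            + ((p:ℤ) * ξ j) * (∑ k, z k * N k i) + ((p:ℤ)^2) * (∑ k, N k i * N k j) := by
      simp only [Finset.sum_add_distrib, Finset.mul_sum]
    have hzz : (∑ k, z k * z k) = (p:ℤ) * s := by
      rw [← hs]; simp [dotProduct]
    have huj : (∑ k, z k * N k j) = u j := rfl
    have hui : (∑ k, z k * N k i) = u i := rfl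
    have hsum := hMtM i j
    rw [hexp, hsplit, hzz, huj, hui] at hsum
    have hX : s * ξ i * ξ j + ξ i * u j + u i * ξ j
        = (p:ℤ) * ((m:ℤ)^2 * (if i = j then 1 else 0) - ∑ k, N k i * N k j) := by
      apply mul_left_cancel₀ hp0
      linear_combination hsum + (if i = j then (1:ℤ) else 0) * ((ℓ:ℤ) + (p:ℤ)*(m:ℤ)) * hlZ
    exact ⟨_, hX⟩
  have hquadK : ∀ i j, ((s:ℤ):ZMod p) * ((ξ i:ℤ):ZMod p) * ((ξ j:ℤ):ZMod p)
      + ((ξ i:ℤ):ZMod p) * ((u j:ℤ):ZMod p) + ((u i:ℤ):ZMod p) * ((ξ j:ℤ):ZMod p) = 0 := by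
    intro i j
    have h := (ZMod.intCast_zmod_eq_zero_iff_dvd _ p).mpr (hquad i j)
    push_cast at h
    linear_combination h
  obtain ⟨k0, hk0⟩ := hξne
  -- F5 : 2 u ≡ - s ξ mod p
  have h2u : ∀ j, 2 * ((u j:ℤ):ZMod p) = - (((s:ℤ):ZMod p) * ((ξ j:ℤ):ZMod p)) := by
    have hk : 2 * ((u k0:ℤ):ZMod p) = - (((s:ℤ):ZMod p) * ((ξ k0:ℤ):ZMod p)) := by
      have h := hquadK k0 k0
      have h2 : ((ξ k0:ℤ):ZMod p) * (((s:ℤ):ZMod p) * ((ξ k0:ℤ):ZMod p)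
          + 2 * ((u k0:ℤ):ZMod p)) = 0 := by linear_combination h
      rcases mul_eq_zero.mp h2 with h3 | h3
      · exact absurd h3 hk0
      · linear_combination h3
    intro j
    have h := hquadK k0 j
    have h2 : ((ξ k0:ℤ):ZMod p) * (2 * ((u j:ℤ):ZMod p)
        + ((s:ℤ):ZMod p) * ((ξ j:ℤ):ZMod p)) = 0 := by
      linear_combination 2 * h - ((ξ j:ℤ):ZMod p) * hk
    rcases mul_eq_zero.mp h2 with h3 | h3
    · exact absurd h3 hk0
    · linear_combination h3
  -- F6 : main identity
  have hfin : ∀ k, lam * (s * ξ k) + lam * u k + ξ k * Zw + p * (∑ j, w j * N j k)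
      = ∑ j, (s * ξ j + u j) * B j k := by
    intro k
    apply mul_left_cancel₀ hp0
    have hsum : ∑ i, z i * (∑ j, AZ i j * M j k) = ∑ i, z i * (∑ j, M i j * B j k) := by
      refine Finset.sum_congr rfl fun i _ => ?_
      have h := congrFun (congrFun hE1 i) k
      rw [Matrix.mul_apply, Matrix.mul_apply] at h
      rw [h]
    have hLswap : ∑ i, z i * (∑ j, AZ i j * M j k) = ∑ j, (∑ i, z i * AZ i j) * M j k := by
      calc ∑ i, z i * (∑ j, AZ i j * M j k) = ∑ i, ∑ j, z i * (AZ i j * M j k) := by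
            exact Finset.sum_congr rfl fun i _ => Finset.mul_sum _ _ _
        _ = ∑ j, ∑ i, z i * (AZ i j * M j k) := Finset.sum_comm
        _ = ∑ j, (∑ i, z i * AZ i j) * M j k := by
            refine Finset.sum_congr rfl fun j _ => ?_
            rw [Finset.sum_mul]
            exact Finset.sum_congr rfl fun i _ => by ring
    have hcolA : ∀ j, (∑ i, z i * AZ i j) = lam * z j + p * w j := by
      intro j
      rw [show (∑ i, z i * AZ i j) = ∑ i, AZ j i * z i from
        Finset.sum_congr rfl fun i _ => by rw [hAZsymm i j]; ring]
      exact hAzi j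
    have hL : ∑ j, (∑ i, z i * AZ i j) * M j k
        = (lam * ξ k) * (∑ j, z j * z j) + ((p:ℤ) * lam) * (∑ j, z j * N j k)
          + ((p:ℤ) * ξ k) * (∑ j, z j * w j) + ((p:ℤ)^2) * (∑ j, w j * N j k) := by
      calc ∑ j, (∑ i, z i * AZ i j) * M j k
          = ∑ j, ((lam * ξ k) * (z j * z j) + ((p:ℤ) * lam) * (z j * N j k)
            + ((p:ℤ) * ξ k) * (z j * w j) + ((p:ℤ)^2) * (w j * N j k)) :=
            Finset.sum_congr rfl fun j _ => by rw [hcolA j, hN j k]; ring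
        _ = _ := by simp only [Finset.sum_add_distrib, Finset.mul_sum]
    have hcolM2 : ∀ j, (∑ i, z i * M i j) = (p:ℤ) * (s * ξ j + u j) := by
      intro j
      have h1 : ∑ i, z i * M i j = (ξ j) * (∑ i, z i * z i) + (p:ℤ) * (∑ i, z i * N i j) := by
        calc ∑ i, z i * M i j
            = ∑ i, ((ξ j) * (z i * z i) + (p:ℤ) * (z i * N i j)) :=
              Finset.sum_congr rfl fun i _ => by rw [hN i j]; ring
          _ = _ := by simp only [Finset.sum_add_distrib, Finset.mul_sum]
      rw [h1, show (∑ i, z i * z i) = (p:ℤ) * s from by rw [← hs]; simp [dotProduct]]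
      have : (∑ i, z i * N i j) = u j := rfl
      rw [this]; ring
    have hR : ∑ i, z i * (∑ j, M i j * B j k) = (p:ℤ) * ∑ j, (s * ξ j + u j) * B j k := by
      calc ∑ i, z i * (∑ j, M i j * B j k) = ∑ i, ∑ j, z i * (M i j * B j k) := by
            exact Finset.sum_congr rfl fun i _ => Finset.mul_sum _ _ _
        _ = ∑ j, ∑ i, z i * (M i j * B j k) := Finset.sum_comm
        _ = ∑ j, (∑ i, z i * M i j) * B j k := by
            refine Finset.sum_congr rfl fun j _ => ?_
            rw [Finset.sum_mul]
            exact Finset.sum_congr rfl fun i _ => by ring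
        _ = ∑ j, (p:ℤ) * ((s * ξ j + u j) * B j k) := by
            exact Finset.sum_congr rfl fun j _ => by rw [hcolM2 j]; ring
        _ = (p:ℤ) * ∑ j, (s * ξ j + u j) * B j k := (Finset.mul_sum _ _ _).symm
    have hfinal := hsum
    rw [hLswap, hL, hR] at hfinal
    rw [show (∑ j, z j * z j) = (p:ℤ) * s from by rw [← hs]; simp [dotProduct]] at hfinal
    have hu2 : (∑ j, z j * N j k) = u k := rfl
    have hz2' : (∑ j, z j * w j) = Zw := rfl
    rw [hu2, hz2'] at hfinal
    linear_combination hfinal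
  -- cast F6 mod p
  have hfinK : ∀ k, ((lam:ℤ):ZMod p) * ((s:ℤ):ZMod p) * ((ξ k:ℤ):ZMod p)
      + ((lam:ℤ):ZMod p) * ((u k:ℤ):ZMod p) + ((ξ k:ℤ):ZMod p) * ((Zw:ℤ):ZMod p)
      = ∑ j, (((s:ℤ):ZMod p) * ((ξ j:ℤ):ZMod p) + ((u j:ℤ):ZMod p)) * ((B j k:ℤ):ZMod p) := by
    intro k
    have h : (((lam * (s * ξ k) + lam * u k + ξ k * Zw + p * (∑ j, w j * N j k)) : ℤ) : ZMod p)
        = (((∑ j, (s * ξ j + u j) * B j k : ℤ)) : ZMod p) := by rw [hfin k]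
    push_cast at h
    rw [ZMod.natCast_self] at h
    linear_combination h
  -- conclude
  have hZwb : ((Zw : ℤ) : ZMod p) = 0 := by
    have hk := hfinK k0
    have hRHS : 2 * (∑ j, (((s:ℤ):ZMod p) * ((ξ j:ℤ):ZMod p) + ((u j:ℤ):ZMod p)) * ((B j k0:ℤ):ZMod p))
        = ((s:ℤ):ZMod p) * ∑ j, ((ξ j:ℤ):ZMod p) * ((B j k0:ℤ):ZMod p) := by
      rw [Finset.mul_sum, Finset.mul_sum]
      refine Finset.sum_congr rfl fun j _ => ?_
      linear_combination ((B j k0:ℤ):ZMod p) * h2u j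
    have h1 : 2 * (((lam:ℤ):ZMod p) * ((s:ℤ):ZMod p) * ((ξ k0:ℤ):ZMod p))
        + 2 * (((lam:ℤ):ZMod p) * ((u k0:ℤ):ZMod p))
        + 2 * (((ξ k0:ℤ):ZMod p) * ((Zw:ℤ):ZMod p))
        = ((s:ℤ):ZMod p) * (((lam:ℤ):ZMod p) * ((ξ k0:ℤ):ZMod p)) := by
      calc 2 * (((lam:ℤ):ZMod p) * ((s:ℤ):ZMod p) * ((ξ k0:ℤ):ZMod p))
            + 2 * (((lam:ℤ):ZMod p) * ((u k0:ℤ):ZMod p))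
            + 2 * (((ξ k0:ℤ):ZMod p) * ((Zw:ℤ):ZMod p))
          = 2 * (((lam:ℤ):ZMod p) * ((s:ℤ):ZMod p) * ((ξ k0:ℤ):ZMod p)
            + ((lam:ℤ):ZMod p) * ((u k0:ℤ):ZMod p) + ((ξ k0:ℤ):ZMod p) * ((Zw:ℤ):ZMod p)) := by
            ring
        _ = 2 * (∑ j, (((s:ℤ):ZMod p) * ((ξ j:ℤ):ZMod p) + ((u j:ℤ):ZMod p)) * ((B j k0:ℤ):ZMod p)) := by
            rw [hk]
        _ = ((s:ℤ):ZMod p) * ∑ j, ((ξ j:ℤ):ZMod p) * ((B j k0:ℤ):ZMod p) := hRHS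
        _ = ((s:ℤ):ZMod p) * (((lam:ℤ):ZMod p) * ((ξ k0:ℤ):ZMod p)) := by rw [hBξ k0]
    have h2 : ((2:ZMod p) * ((ξ k0:ℤ):ZMod p)) * ((Zw:ℤ):ZMod p) = 0 := by
      linear_combination h1 - ((lam:ℤ):ZMod p) * h2u k0
    rcases mul_eq_zero.mp h2 with h3 | h3
    · exact absurd h3 (mul_ne_zero h2K hk0)
    · exact h3
  have hpZw : (p:ℤ) ∣ Zw := (ZMod.intCast_zmod_eq_zero_iff_dvd _ p).mp hZwb
  rw [key]
  obtain ⟨c, hc⟩ := hpZw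
  exact ⟨c, by rw [hc]; ring⟩
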